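/- Let n have shift orbit of cardinality d, and let j, l ∈ ℤ. The eigenbases of Λ_j and Λ_l restricted to the Pauli subspace span(E_n) are mutually unbiased (all pairwise overlaps have modulus 1/√d) if and only if gcd((l−j)·|n|·d/M, d) = 1. -/

import Mathlib

open Finset

noncomputable section

/-- Total photon number `|n|`. -/
def totalPhotons {M : ℕ} (n : Fin M → ℕ) : ℕ := ∑ m : Fin M, n m

/-- Clock label `μ(n) = Σ m·n(m)`. -/
def clockLabel {M : ℕ} (n : Fin M → ℕ) : ℕ := ∑ m : Fin M, (m : ℕ) * n m

/-- `ω = exp(2πi/M)`. -/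
def omegaM (M : ℕ) : ℂ := Complex.exp (2 * Real.pi * Complex.I / M)

/-- The Fock space over `M` modes: amplitudes on occupation vectors. -/
abbrev Fock (M : ℕ) := (Fin M → ℕ) → ℂ

/-- Mode-shift operator: `X |n⟩ = |X·n⟩` with `(X·n)(m) = n(m−1)` mod `M`. -/
def fockX {M : ℕ} [NeZero M] (f : Fock M) : Fock M := fun v => f (fun m => v (m + 1))

/-- Phase-shift operator: `Z |n⟩ = ω^{μ(n)} |n⟩`. -/
def fockZ {M : ℕ} (f : Fock M) : Fock M := fun v => omegaM M ^ clockLabel v * f v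

/-- Fock basis state `|n⟩`. -/
def fockDelta {M : ℕ} (n : Fin M → ℕ) : Fock M := fun v => if v = n then 1 else 0

/-- Cyclic mode shift on occupation vectors: `(X·n)(m) = n(m-1)` mod `M`. -/
def modeShift {M : ℕ} [NeZero M] (n : Fin M → ℕ) : Fin M → ℕ := fun m => n (m - 1)

/-- `ω^{1/2} = exp(πi/M)`. -/
def omegaHalf (M : ℕ) : ℂ := Complex.exp (Real.pi * Complex.I / M)

/-- Generalized Pauli operator `Λ_j = X Z^j`. -/
def fockLambda {M : ℕ} [NeZero M] (j : ℤ) (f : Fock M) : Fock M :=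
  fockX (fun v => omegaM M ^ (j * (clockLabel v : ℤ)) * f v)

/-- The `Λ_j` eigenvector `|E_{n,m}(Λ_j)⟩ = (1/√d) Σ_{k<d} ω^{−(½(M−1)j|n|+m)k} Λ_j^k |n⟩`
on the Pauli subspace of `n` (with `ω^{1/2} = exp(πi/M)`). -/
def pauliEigvec {M : ℕ} [NeZero M] (j : ℤ) (n : Fin M → ℕ) (d m : ℕ) : Fock M :=
  fun v => (1 / Real.sqrt d : ℂ) *
    ∑ k ∈ Finset.range d,
      omegaHalf M ^ (-((((M : ℤ) - 1) * j * (totalPhotons n : ℤ) + 2 * (m : ℤ)) * k)) *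
        ((fockLambda j)^[k] (fockDelta n)) v

/-- Inner product of two amplitude functions supported on the Pauli subspace
`span{X^k|n⟩ : k < d}`. -/
def orbitInner {M : ℕ} [NeZero M] (n : Fin M → ℕ) (d : ℕ) (f g : Fock M) : ℂ :=
  ∑ k ∈ Finset.range d,
    (starRingEnd ℂ) (f (modeShift^[k] n)) * g (modeShift^[k] n)

/-!
On the orbit basis `X^r |n⟩`, `r < d`, the vector `|E_{n,m}(Λ_j)⟩` has amplitudes `c_j(r) / √d`,
and `μ(X^r n) ≡ μ(n) + r|n| (mod M)` gives `c_j(r + v) = c_j(r) c_j(v) ω^{j|n|rv}`. Moreover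
`c_j(d) = 1` exactly when `M/d ∣ m`, since `Σ_{r<M} μ(X^r n) = |n| M (M-1)/2`. So
`f = conj c_l · c_j` is a `d`-periodic unimodular quadratic phase with cross term `z^{rv}`,
`z = ω^{(j-l)|n|}`, and `|Σ_{r<d} f(r)|² = d Σ_{v<d, z^v = 1} f(v)`. If `z^v ≠ 1` for `0 < v < d`,
every overlap has modulus `1/√d`. Otherwise, letting `m` run over the multiples of `M/d` twists `f`
by all characters of `ℤ/d`, and Fourier inversion forbids the overlaps from all having modulus
`1/√d`. Finally `z^v = 1 ↔ d ∣ (l-j)(|n|d/M) v`, which has no solution `0 < v < d` iff the gcd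
is `1`.
-/

section RootsOfUnity

variable {K : Type*} [Field K]

theorem sum_range_pow_eq_ite [DecidableEq K] {x : K} {d : ℕ} (hx : x ^ d = 1) :
    ∑ r ∈ range d, x ^ r = if x = 1 then (d : K) else 0 := by
  split_ifs with h
  · simp [h]
  · rw [geom_sum_eq h, hx, sub_self, zero_div]

theorem IsPrimitiveRoot.zpow_eq_zpow_of_modEq {η : K} {k : ℕ} [NeZero k]
    (hη : IsPrimitiveRoot η k) {a b : ℤ} (hab : a ≡ b [ZMOD k]) : η ^ a = η ^ b := by
  have hη0 : η ≠ 0 := hη.ne_zero (NeZero.ne k)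
  rw [← sub_add_cancel a b, zpow_add₀ hη0, (hη.zpow_eq_one_iff_dvd _).2 hab.symm.dvd, one_mul]

theorem IsPrimitiveRoot.eq_zero_of_forall_sum_mul_pow_eq {η : K} {d : ℕ} [NeZero d]
    (hη : IsPrimitiveRoot η d) {c : ℕ → K} {C : K}
    (h : ∀ w < d, ∑ v ∈ range d, c v * η ^ (v * w) = C) {v₀ : ℕ} (hv₀ : v₀ < d)
    (hv₀0 : v₀ ≠ 0) : c v₀ = 0 := by
  classical
  have horth : ∀ k, ∑ w ∈ range d, (η ^ k) ^ w = if d ∣ k then (d : K) else 0 := fun k => by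
    rw [sum_range_pow_eq_ite (by rw [← pow_mul, mul_comm, pow_mul, hη.pow_eq_one, one_pow])]
    exact if_congr (hη.pow_eq_one_iff_dvd k) rfl rfl
  have hd : (d : K) ≠ 0 := hη.neZero'.out
  have hshift : ∀ v < d, d ∣ v + (d - v₀) ↔ v = v₀ := fun v hv => by
    refine ⟨fun hdvd => ?_, fun h => ⟨1, by omega⟩⟩
    obtain ⟨k, hk⟩ := hdvd
    have hk2 : k < 2 := Nat.lt_of_mul_lt_mul_left (a := d) (by omega)
    interval_cases k <;> omega
  have key : ∑ w ∈ range d, (η ^ (d - v₀)) ^ w * ∑ v ∈ range d, c v * η ^ (v * w)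
      = d * c v₀ := by
    simp_rw [Finset.mul_sum]
    rw [Finset.sum_comm]
    calc ∑ v ∈ range d, ∑ w ∈ range d, (η ^ (d - v₀)) ^ w * (c v * η ^ (v * w))
        = ∑ v ∈ range d, c v * ∑ w ∈ range d, (η ^ (v + (d - v₀))) ^ w := by
          refine Finset.sum_congr rfl fun v _ => ?_
          rw [Finset.mul_sum]
          refine Finset.sum_congr rfl fun w _ => ?_
          ring
      _ = d * c v₀ := by
          rw [Finset.sum_eq_single v₀ (fun v hv hne => by
              rw [horth, if_neg (by rwa [hshift v (Finset.mem_range.1 hv)]), mul_zero])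
            (fun h => absurd (Finset.mem_range.2 hv₀) h),
            horth, if_pos ((hshift v₀ hv₀).2 rfl), mul_comm]
  have hzero : ∑ w ∈ range d, (η ^ (d - v₀)) ^ w * ∑ v ∈ range d, c v * η ^ (v * w) = 0 := by
    rw [Finset.sum_congr rfl fun w hw => by rw [h w (Finset.mem_range.1 hw)], ← Finset.sum_mul,
      horth, if_neg, zero_mul]
    exact Nat.not_dvd_of_pos_of_lt (by omega) (by omega)
  simpa [hd] using key.symm.trans hzero

end RootsOfUnity

theorem Function.Periodic.sum_range_add {β : Type*} [AddCommMonoid β] {f : ℕ → β} {d : ℕ}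
    (hf : Function.Periodic f d) (r : ℕ) :
    ∑ v ∈ range d, f (r + v) = ∑ v ∈ range d, f v := by
  induction r with
  | zero => simp
  | succ r ih =>
    rw [← ih]
    rcases d with _ | k
    · simp
    rw [Finset.sum_range_succ, Finset.sum_range_succ' (fun v => f (r + v)), add_zero, ← hf r]
    simp only [add_assoc, add_comm 1]

theorem Function.minimalPeriod_eq_of_forall_lt {α : Type*} {f : α → α} {x : α} {d : ℕ}
    (hd : 0 < d) (hfix : f^[d] x = x) (hmin : ∀ k, 0 < k → k < d → f^[k] x ≠ x) :
    Function.minimalPeriod f x = d :=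
  le_antisymm (Function.IsPeriodicPt.minimalPeriod_le hd hfix) <| not_lt.1 fun h =>
    hmin _ (Function.IsPeriodicPt.minimalPeriod_pos hd hfix) h
      (Function.isPeriodicPt_minimalPeriod f x)

/-- Expanding the square and substituting `r' = r + v` (legitimate by periodicity), the cross term
`z ^ (r * v)` leaves a geometric sum in `r` for each `v`. -/
theorem conj_sum_mul_sum_eq_of_add {f : ℕ → ℂ} {z : ℂ} {d : ℕ}
    (hf : ∀ r, ‖f r‖ = 1) (hadd : ∀ r v, f (r + v) = f r * f v * z ^ (r * v))
    (hfd : f d = 1) (hzd : z ^ d = 1) :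
    starRingEnd ℂ (∑ r ∈ range d, f r) * ∑ r ∈ range d, f r
      = d * ∑ v ∈ range d, if z ^ v = 1 then f v else 0 := by
  have hper : Function.Periodic f d := fun r => by
    rw [hadd, hfd, mul_comm r d, pow_mul, hzd, one_pow, mul_one, mul_one]
  have hunit : ∀ r, starRingEnd ℂ (f r) * f r = 1 := fun r => by
    rw [Complex.conj_mul', hf]
    norm_num
  calc starRingEnd ℂ (∑ r ∈ range d, f r) * ∑ r ∈ range d, f r
      = ∑ r ∈ range d, ∑ v ∈ range d, f v * (z ^ v) ^ r := by
        rw [map_sum, Finset.sum_mul]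
        refine Finset.sum_congr rfl fun r _ => ?_
        rw [← hper.sum_range_add r, Finset.mul_sum]
        refine Finset.sum_congr rfl fun v _ => ?_
        rw [hadd, ← pow_mul, mul_comm v r, ← mul_assoc, ← mul_assoc, hunit, one_mul]
    _ = ∑ v ∈ range d, f v * ∑ r ∈ range d, (z ^ v) ^ r := by
        rw [Finset.sum_comm]; simp_rw [Finset.mul_sum]
    _ = d * ∑ v ∈ range d, if z ^ v = 1 then f v else 0 := by
        rw [Finset.mul_sum]
        refine Finset.sum_congr rfl fun v _ => ?_
        rw [sum_range_pow_eq_ite (by rw [← pow_mul, mul_comm, pow_mul, hzd, one_pow])]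
        split_ifs <;> ring

theorem Int.gcd_eq_one_iff_forall_lt_not_dvd_mul {t : ℤ} {d : ℕ} (hd : 0 < d) :
    Int.gcd t d = 1 ↔ ∀ v : ℕ, 0 < v → v < d → ¬ (d : ℤ) ∣ t * v := by
  constructor
  · intro hg v hv hvd hdvd
    have := (Int.isCoprime_iff_gcd_eq_one.2 hg).symm.dvd_of_dvd_mul_left hdvd
    have := Int.le_of_dvd (by exact_mod_cast hv) this
    omega
  · intro h
    by_contra hg
    set g := Int.gcd t d
    have hgd : g ∣ d := by exact_mod_cast Int.gcd_dvd_right t d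
    have hg0 : 0 < g := Nat.pos_of_dvd_of_pos hgd hd
    refine h (d / g) (Nat.div_pos (Nat.le_of_dvd hd hgd) hg0) (Nat.div_lt_self hd (by omega)) ?_
    obtain ⟨c, hc⟩ : (g : ℤ) ∣ t := Int.gcd_dvd_left t d
    have hgdg : (g : ℤ) * ↑(d / g) = d := by exact_mod_cast Nat.mul_div_cancel' hgd
    exact ⟨c, by rw [hc, mul_right_comm, hgdg]⟩

theorem norm_one_div_mul_eq_iff {d : ℕ} (hd : 0 < d) (S : ℂ) :
    ‖(1 / d : ℂ) * S‖ = 1 / √d ↔ starRingEnd ℂ S * S = d := by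
  have hd' : (0 : ℝ) < d := by exact_mod_cast hd
  have hs : 0 < √(d : ℝ) := Real.sqrt_pos.2 hd'
  have hss : √(d : ℝ) * √d = d := Real.mul_self_sqrt hd'.le
  calc ‖(1 / d : ℂ) * S‖ = 1 / √d ↔ ‖S‖ * √d = d := by
        rw [norm_mul, norm_div, norm_one, Complex.norm_natCast, one_div_mul_eq_div,
          div_eq_div_iff hd'.ne' hs.ne', one_mul]
    _ ↔ ‖S‖ = √d := ⟨fun h => mul_right_cancel₀ hs.ne' (h.trans hss.symm), fun h => h ▸ hss⟩
    _ ↔ ‖S‖ ^ 2 = d := by rw [eq_comm, Real.sqrt_eq_iff_eq_sq hd'.le (norm_nonneg S), eq_comm]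
    _ ↔ starRingEnd ℂ S * S = d := by rw [Complex.conj_mul']; norm_cast

section PhaseRoots

variable {M : ℕ}

theorem isPrimitiveRoot_omegaM [NeZero M] : IsPrimitiveRoot (omegaM M) M :=
  Complex.isPrimitiveRoot_exp M (NeZero.ne M)

theorem isPrimitiveRoot_omegaHalf [NeZero M] : IsPrimitiveRoot (omegaHalf M) (2 * M) := by
  convert Complex.isPrimitiveRoot_exp (2 * M) (by simp [NeZero.ne M]) using 2
  unfold omegaHalf
  push_cast
  field_simp

theorem omegaM_ne_zero : omegaM M ≠ 0 := Complex.exp_ne_zero _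

theorem omegaHalf_ne_zero : omegaHalf M ≠ 0 := Complex.exp_ne_zero _

theorem norm_omegaM : ‖omegaM M‖ = 1 := by simp [omegaM, Complex.norm_exp]

theorem norm_omegaHalf : ‖omegaHalf M‖ = 1 := by simp [omegaHalf, Complex.norm_exp]

theorem omegaHalf_sq : omegaHalf M ^ 2 = omegaM M := by
  unfold omegaHalf omegaM
  rw [← Complex.exp_nat_mul]
  ring_nf

theorem conj_zpow_of_norm_eq_one {x : ℂ} (hx : ‖x‖ = 1) (k : ℤ) :
    starRingEnd ℂ (x ^ k) = x ^ (-k) := by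
  rw [map_zpow₀, ← Complex.inv_eq_conj hx, inv_zpow', zpow_neg]

end PhaseRoots

section Orbit

variable {M : ℕ} [NeZero M]

theorem eq_modeShift_iff {x v : Fin M → ℕ} : v = modeShift x ↔ (fun m => v (m + 1)) = x := by
  constructor <;> rintro rfl <;> funext m <;> simp [modeShift]

open Fin.NatCast in
theorem modeShift_iterate_apply (x : Fin M → ℕ) (k : ℕ) (m : Fin M) :
    (modeShift^[k] x) m = x (m - k) := by
  induction k generalizing m with
  | zero => simp
  | succ k ih =>
    rw [Function.iterate_succ_apply', modeShift, ih]
    congr 1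
    push_cast
    abel

theorem totalPhotons_modeShift (x : Fin M → ℕ) : totalPhotons (modeShift x) = totalPhotons x :=
  Fintype.sum_equiv (Equiv.subRight 1) _ _ fun _ => rfl

theorem totalPhotons_modeShift_iterate (x : Fin M → ℕ) (k : ℕ) :
    totalPhotons (modeShift^[k] x) = totalPhotons x := by
  induction k with
  | zero => rfl
  | succ k ih => rw [Function.iterate_succ_apply', totalPhotons_modeShift, ih]

theorem clockLabel_modeShift_modEq (x : Fin M → ℕ) :
    (clockLabel (modeShift x) : ℤ) ≡ clockLabel x + totalPhotons x [ZMOD M] := by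
  rw [← ZMod.intCast_eq_intCast_iff]
  push_cast
  unfold clockLabel totalPhotons modeShift
  push_cast
  rw [← Fintype.sum_equiv (Equiv.addRight 1)
    (fun m => (((m + 1 : Fin M) : ℕ) : ZMod M) * x m) _ fun m => by simp]
  have hval : ∀ m : Fin M, (((m + 1 : Fin M) : ℕ) : ZMod M) = (m : ℕ) + 1 := fun m => by
    rw [Fin.val_add, ZMod.natCast_mod, Nat.cast_add, Fin.val_one', ZMod.natCast_mod,
      Nat.cast_one]
  simp_rw [hval, add_mul, one_mul, Finset.sum_add_distrib]

theorem clockLabel_modeShift_iterate_modEq (x : Fin M → ℕ) (k : ℕ) :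
    (clockLabel (modeShift^[k] x) : ℤ) ≡ clockLabel x + k * totalPhotons x [ZMOD M] := by
  induction k with
  | zero => simp [Int.ModEq.refl]
  | succ k ih =>
    rw [Function.iterate_succ_apply']
    refine (clockLabel_modeShift_modEq _).trans ?_
    rw [totalPhotons_modeShift_iterate]
    convert ih.add_right (totalPhotons x : ℤ) using 1
    push_cast
    ring

def orbitClockSum (n : Fin M → ℕ) (r : ℕ) : ℤ :=
  ∑ i ∈ range r, (clockLabel (modeShift^[i] n) : ℤ)

theorem orbitClockSum_add_modEq (n : Fin M → ℕ) (r v : ℕ) :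
    orbitClockSum n (r + v) ≡ orbitClockSum n r + orbitClockSum n v
      + r * v * totalPhotons n [ZMOD M] := by
  rw [orbitClockSum, Finset.sum_range_add, add_assoc]
  refine Int.ModEq.add_left _ ?_
  have hshift : ∀ i, (clockLabel (modeShift^[r + i] n) : ℤ)
      ≡ clockLabel (modeShift^[i] n) + r * totalPhotons n [ZMOD M] := fun i =>
    (clockLabel_modeShift_iterate_modEq n (r + i)).trans
      (by convert ((clockLabel_modeShift_iterate_modEq n i).add_right
        (r * totalPhotons n : ℤ)).symm using 1; push_cast; ring)
  refine (Int.ModEq.sum fun i _ => hshift i).trans ?_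
  rw [Finset.sum_add_distrib, Finset.sum_const, Finset.card_range, nsmul_eq_mul, orbitClockSum,
    show (v : ℤ) * (r * totalPhotons n) = r * v * totalPhotons n by ring]

theorem orbitClockSum_period_add {n : Fin M → ℕ} {d : ℕ} (hfix : modeShift^[d] n = n) (r : ℕ) :
    orbitClockSum n (d + r) = orbitClockSum n d + orbitClockSum n r := by
  rw [orbitClockSum, orbitClockSum, orbitClockSum, Finset.sum_range_add]
  congr 1
  refine Finset.sum_congr rfl fun i _ => ?_
  rw [add_comm, Function.iterate_add_apply, hfix]

theorem orbitClockSum_period_mul {n : Fin M → ℕ} {d : ℕ} (hfix : modeShift^[d] n = n) (k : ℕ) :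
    orbitClockSum n (d * k) = k * orbitClockSum n d := by
  induction k with
  | zero => simp [orbitClockSum]
  | succ k ih => rw [Nat.mul_succ, add_comm, orbitClockSum_period_add hfix, ih]; push_cast; ring

open Fin.NatCast in
/-- Over a full revolution every photon visits every mode once. -/
theorem two_mul_orbitClockSum_self (n : Fin M → ℕ) :
    2 * orbitClockSum n M = totalPhotons n * M * (M - 1) := by
  have hshift : ∀ i : Fin M,
      clockLabel (modeShift^[i] n) = ∑ m : Fin M, ((m + i : Fin M) : ℕ) * n m := fun i => by
    rw [clockLabel]
    exact (Fintype.sum_equiv (Equiv.addRight i) _ _ fun m => by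
      rw [Equiv.coe_addRight, modeShift_iterate_apply, Fin.cast_val_eq_self,
        add_sub_cancel_right]).symm
  have hsum : (∑ k : Fin M, (k : ℕ)) * 2 = M * (M - 1) := by
    rw [Fin.sum_univ_eq_sum_range (fun k => k) M, Finset.sum_range_id_mul_two]
  have hnat : (∑ i ∈ range M, clockLabel (modeShift^[i] n)) * 2
      = totalPhotons n * (M * (M - 1)) := by
    rw [← Fin.sum_univ_eq_sum_range (fun i => clockLabel (modeShift^[i] n)) M]
    simp_rw [hshift]
    rw [Finset.sum_comm, totalPhotons, Finset.sum_mul, Finset.sum_mul]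
    refine Finset.sum_congr rfl fun m _ => ?_
    rw [← Finset.sum_mul, mul_right_comm, ← hsum, mul_comm]
    exact congrArg (fun s => n m * (s * 2))
      (Fintype.sum_equiv (Equiv.addLeft m) (fun i => ((m + i : Fin M) : ℕ)) _ fun _ => rfl)
  have hM : ((M - 1 : ℕ) : ℤ) = M - 1 := by
    rw [Nat.cast_sub NeZero.one_le, Nat.cast_one]
  rw [orbitClockSum, ← hM, mul_comm, mul_assoc]
  exact_mod_cast hnat

theorem two_mul_orbitClockSum_period {n : Fin M → ℕ} {d : ℕ} (hfix : modeShift^[d] n = n)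
    (hdM : d ∣ M) : 2 * orbitClockSum n d = totalPhotons n * d * (M - 1) := by
  obtain ⟨e, rfl⟩ := hdM
  have he0 : (e : ℤ) ≠ 0 := by exact_mod_cast right_ne_zero_of_mul (NeZero.ne (d * e))
  have h := two_mul_orbitClockSum_self n
  rw [orbitClockSum_period_mul hfix] at h
  push_cast at h ⊢
  apply mul_left_cancel₀ he0
  linear_combination h

theorem dvd_totalPhotons_mul {n : Fin M → ℕ} {d : ℕ} (hfix : modeShift^[d] n = n) :
    M ∣ totalPhotons n * d := by
  have h := clockLabel_modeShift_iterate_modEq n d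
  rw [hfix] at h
  have := h.dvd
  rw [add_sub_cancel_left, mul_comm] at this
  exact_mod_cast this

end Orbit

section Eigenvectors

variable {M : ℕ} [NeZero M]

theorem fockLambda_smul (j : ℤ) (c : ℂ) (f : Fock M) :
    fockLambda j (c • f) = c • fockLambda j f := by
  funext v
  simp only [fockLambda, fockX, Pi.smul_apply, smul_eq_mul]
  ring

theorem fockLambda_fockDelta (j : ℤ) (x : Fin M → ℕ) :
    fockLambda j (fockDelta x) = omegaM M ^ (j * (clockLabel x : ℤ)) • fockDelta (modeShift x) := by
  funext v
  simp only [fockLambda, fockX, fockDelta, Pi.smul_apply, smul_eq_mul]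
  by_cases h : (fun m => v (m + 1)) = x
  · rw [if_pos h, if_pos (eq_modeShift_iff.2 h), ← h]
  · rw [if_neg h, if_neg (mt eq_modeShift_iff.1 h), mul_zero, mul_zero]

theorem fockLambda_iterate_fockDelta (j : ℤ) (x : Fin M → ℕ) (k : ℕ) :
    (fockLambda j)^[k] (fockDelta x)
      = omegaM M ^ (j * orbitClockSum x k) • fockDelta (modeShift^[k] x) := by
  induction k with
  | zero => simp [orbitClockSum]
  | succ k ih =>
    rw [Function.iterate_succ_apply', ih, fockLambda_smul, fockLambda_fockDelta, smul_smul,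
      ← zpow_add₀ omegaM_ne_zero, ← mul_add, orbitClockSum, orbitClockSum,
      Finset.sum_range_succ, Function.iterate_succ_apply']

def eigvecCoeff (j : ℤ) (n : Fin M → ℕ) (m r : ℕ) : ℂ :=
  omegaHalf M ^ (-((((M : ℤ) - 1) * j * (totalPhotons n : ℤ) + 2 * (m : ℤ)) * r))
    * omegaM M ^ (j * orbitClockSum n r)

theorem pauliEigvec_modeShift_iterate {j : ℤ} {n : Fin M → ℕ} {d : ℕ}
    (hper : Function.minimalPeriod modeShift n = d) (m : ℕ) {r : ℕ} (hr : r < d) :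
    pauliEigvec j n d m (modeShift^[r] n) = (1 / Real.sqrt d : ℂ) * eigvecCoeff j n m r := by
  rw [pauliEigvec, eigvecCoeff, Finset.sum_eq_single_of_mem r (Finset.mem_range.2 hr)]
  · rw [fockLambda_iterate_fockDelta, Pi.smul_apply, fockDelta, if_pos rfl, smul_eq_mul, mul_one]
  · intro k hk hkr
    rw [fockLambda_iterate_fockDelta, Pi.smul_apply, fockDelta, if_neg, smul_zero, mul_zero]
    intro h
    exact hkr (Function.iterate_injOn_Iio_minimalPeriod (by rw [hper]; exact hr)
      (by rw [hper]; exact Finset.mem_range.1 hk) h).symm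

theorem eigvecCoeff_zero (j : ℤ) (n : Fin M → ℕ) (m : ℕ) : eigvecCoeff j n m 0 = 1 := by
  simp [eigvecCoeff, orbitClockSum]

theorem norm_eigvecCoeff (j : ℤ) (n : Fin M → ℕ) (m r : ℕ) : ‖eigvecCoeff j n m r‖ = 1 := by
  rw [eigvecCoeff, norm_mul, norm_zpow, norm_zpow, norm_omegaHalf, norm_omegaM, one_zpow,
    one_zpow, one_mul]

theorem eigvecCoeff_add (j : ℤ) (n : Fin M → ℕ) (m r v : ℕ) :
    eigvecCoeff j n m (r + v)
      = eigvecCoeff j n m r * eigvecCoeff j n m v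
        * (omegaM M ^ (j * (totalPhotons n : ℤ))) ^ (r * v) := by
  have hlin : omegaHalf M ^ (-((((M : ℤ) - 1) * j * totalPhotons n + 2 * m) * ↑(r + v)))
      = omegaHalf M ^ (-((((M : ℤ) - 1) * j * totalPhotons n + 2 * m) * r))
        * omegaHalf M ^ (-((((M : ℤ) - 1) * j * totalPhotons n + 2 * m) * v)) := by
    rw [← zpow_add₀ omegaHalf_ne_zero]
    push_cast
    ring_nf
  have hquad : omegaM M ^ (j * orbitClockSum n (r + v))
      = omegaM M ^ (j * orbitClockSum n r) * omegaM M ^ (j * orbitClockSum n v)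
        * (omegaM M ^ (j * (totalPhotons n : ℤ))) ^ (r * v) := by
    rw [← zpow_natCast, ← zpow_mul, ← zpow_add₀ omegaM_ne_zero, ← zpow_add₀ omegaM_ne_zero]
    refine isPrimitiveRoot_omegaM.zpow_eq_zpow_of_modEq ?_
    convert (orbitClockSum_add_modEq n r v).mul_left j using 1
    push_cast
    ring
  rw [eigvecCoeff, eigvecCoeff, eigvecCoeff, hlin, hquad]
  ring

theorem eigvecCoeff_period {j : ℤ} {n : Fin M → ℕ} {d m : ℕ} (hfix : modeShift^[d] n = n)
    (hdM : d ∣ M) (hm : M / d ∣ m) : eigvecCoeff j n m d = 1 := by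
  obtain ⟨k, hk⟩ := hm
  have hS := two_mul_orbitClockSum_period hfix hdM
  have hM : ((d * (M / d) : ℕ) : ℤ) = M := by rw [Nat.mul_div_cancel' hdM]
  push_cast at hM
  rw [eigvecCoeff, ← omegaHalf_sq, ← zpow_natCast, ← zpow_mul, ← zpow_add₀ omegaHalf_ne_zero,
    isPrimitiveRoot_omegaHalf.zpow_eq_one_iff_dvd]
  refine ⟨-k, ?_⟩
  rw [hk]
  push_cast
  linear_combination j * hS - 2 * k * hM

theorem conj_eigvecCoeff_eq (j : ℤ) (n : Fin M → ℕ) (m r : ℕ) :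
    starRingEnd ℂ (eigvecCoeff j n m r)
      = starRingEnd ℂ (eigvecCoeff j n 0 r) * omegaM M ^ (m * r) := by
  have hm : omegaM M ^ (m * r) = omegaHalf M ^ (2 * m * r : ℤ) := by
    rw [← omegaHalf_sq, ← pow_mul, ← zpow_natCast]
    push_cast
    ring_nf
  rw [eigvecCoeff, eigvecCoeff, map_mul, map_mul, conj_zpow_of_norm_eq_one norm_omegaHalf,
    conj_zpow_of_norm_eq_one norm_omegaHalf, hm, mul_right_comm (omegaHalf M ^ _),
    ← zpow_add₀ omegaHalf_ne_zero]
  push_cast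
  ring_nf

end Eigenvectors

section Overlap

variable {M : ℕ} [NeZero M]

def overlapSum (l j : ℤ) (n : Fin M → ℕ) (d m m' : ℕ) : ℂ :=
  ∑ r ∈ range d, starRingEnd ℂ (eigvecCoeff l n m r) * eigvecCoeff j n m' r

theorem orbitInner_pauliEigvec {l j : ℤ} {n : Fin M → ℕ} {d : ℕ}
    (hper : Function.minimalPeriod modeShift n = d) (m m' : ℕ) :
    orbitInner n d (pauliEigvec l n d m) (pauliEigvec j n d m')
      = (1 / d : ℂ) * overlapSum l j n d m m' := by
  have hsqrt : starRingEnd ℂ (1 / (Real.sqrt d : ℂ)) * (1 / (Real.sqrt d : ℂ)) = 1 / d := by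
    rw [map_div₀, map_one, Complex.conj_ofReal, div_mul_div_comm, one_mul, ← Complex.ofReal_mul,
      Real.mul_self_sqrt (Nat.cast_nonneg d), Complex.ofReal_natCast]
  rw [orbitInner, overlapSum, Finset.mul_sum]
  refine Finset.sum_congr rfl fun r hr => ?_
  rw [pauliEigvec_modeShift_iterate hper _ (Finset.mem_range.1 hr),
    pauliEigvec_modeShift_iterate hper _ (Finset.mem_range.1 hr), map_mul, ← hsqrt]
  ring

theorem conj_overlapSum_mul_overlapSum {l j : ℤ} {n : Fin M → ℕ} {d m m' : ℕ}
    (hfix : modeShift^[d] n = n) (hdM : d ∣ M) (hm : M / d ∣ m) (hm' : M / d ∣ m') :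
    starRingEnd ℂ (overlapSum l j n d m m') * overlapSum l j n d m m'
      = d * ∑ v ∈ range d, if (omegaM M ^ ((j - l) * (totalPhotons n : ℤ))) ^ v = 1 then
          starRingEnd ℂ (eigvecCoeff l n m v) * eigvecCoeff j n m' v else 0 := by
  have hz : starRingEnd ℂ (omegaM M ^ (l * (totalPhotons n : ℤ)))
      * omegaM M ^ (j * (totalPhotons n : ℤ)) = omegaM M ^ ((j - l) * (totalPhotons n : ℤ)) := by
    rw [conj_zpow_of_norm_eq_one norm_omegaM, ← zpow_add₀ omegaM_ne_zero]
    ring_nf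
  refine conj_sum_mul_sum_eq_of_add (fun r => ?_) (fun r v => ?_) ?_ ?_
  · rw [norm_mul, RCLike.norm_conj, norm_eigvecCoeff, norm_eigvecCoeff, one_mul]
  · rw [eigvecCoeff_add, eigvecCoeff_add, map_mul, map_mul, map_pow, ← hz]
    ring
  · rw [eigvecCoeff_period hfix hdM hm, eigvecCoeff_period hfix hdM hm', map_one, one_mul]
  · rw [← zpow_natCast, ← zpow_mul, isPrimitiveRoot_omegaM.zpow_eq_one_iff_dvd, mul_assoc]
    exact Dvd.dvd.mul_left (by exact_mod_cast dvd_totalPhotons_mul hfix) _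

theorem omegaM_zpow_mul_pow_eq_one_iff {t : ℤ} {N d q : ℕ} (hd : 0 < d) (hq : q * M = N * d)
    (v : ℕ) : (omegaM M ^ (t * N)) ^ v = 1 ↔ (d : ℤ) ∣ t * q * v := by
  have hq' : (q : ℤ) * M = N * d := by exact_mod_cast hq
  rw [← zpow_natCast, ← zpow_mul, isPrimitiveRoot_omegaM.zpow_eq_one_iff_dvd]
  calc (M : ℤ) ∣ t * N * v ↔ (M : ℤ) * d ∣ t * N * v * d :=
        (mul_dvd_mul_iff_right (by exact_mod_cast hd.ne')).symm
    _ ↔ (M : ℤ) * d ∣ M * (t * q * v) := by rw [show t * N * v * d = M * (t * q * v) by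
          linear_combination (-(t * v)) * hq']
    _ ↔ (d : ℤ) ∣ t * q * v := mul_dvd_mul_iff_left (by exact_mod_cast NeZero.ne M)

theorem forall_conj_overlapSum_mul_self_eq_iff {l j : ℤ} {n : Fin M → ℕ} {d : ℕ} (hd : 0 < d)
    (hfix : modeShift^[d] n = n) (hdM : d ∣ M) :
    (∀ m m' : ℕ, M / d ∣ m → m < M → M / d ∣ m' → m' < M →
        starRingEnd ℂ (overlapSum l j n d m m') * overlapSum l j n d m m' = d) ↔
      ∀ v, 0 < v → v < d → (omegaM M ^ ((j - l) * (totalPhotons n : ℤ))) ^ v ≠ 1 := by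
  constructor
  · intro h v hv hvd hzv
    have := NeZero.of_pos hd
    set e := M / d
    have hde : e * d = M := Nat.div_mul_cancel hdM
    have hη : IsPrimitiveRoot (omegaM M ^ e) d :=
      isPrimitiveRoot_omegaM.pow (NeZero.pos M) hde.symm
    -- as `m` runs over multiples `e * w`, the overlaps are the discrete Fourier transform in `w`
    have hF : ∀ w < d, ∑ v ∈ range d,
        (if (omegaM M ^ ((j - l) * (totalPhotons n : ℤ))) ^ v = 1 then
          starRingEnd ℂ (eigvecCoeff l n 0 v) * eigvecCoeff j n 0 v else 0)
          * (omegaM M ^ e) ^ (v * w) = 1 := by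
      intro w hw
      have hew : e * w < M := hde ▸ Nat.mul_lt_mul_of_pos_left hw
        (Nat.pos_of_mul_pos_right (hde ▸ NeZero.pos M))
      have hw1 := h (e * w) 0 (dvd_mul_right e w) hew (dvd_zero e) (NeZero.pos M)
      rw [conj_overlapSum_mul_overlapSum hfix hdM (dvd_mul_right e w) (dvd_zero e),
        mul_eq_left₀ (by exact_mod_cast hd.ne')] at hw1
      refine (Finset.sum_congr rfl fun v _ => ?_).trans hw1
      rw [ite_mul, zero_mul, conj_eigvecCoeff_eq l n (e * w), ← pow_mul]
      ring_nf
    have h0 := hη.eq_zero_of_forall_sum_mul_pow_eq hF hvd hv.ne'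
    rw [if_pos hzv] at h0
    simpa [norm_eigvecCoeff] using congrArg norm h0
  · intro h m m' hm _ hm' _
    rw [conj_overlapSum_mul_overlapSum hfix hdM hm hm',
      Finset.sum_eq_single_of_mem 0 (Finset.mem_range.2 hd) fun v hv hv0 =>
        if_neg (h v (Nat.pos_of_ne_zero hv0) (Finset.mem_range.1 hv)),
      if_pos (pow_zero _), eigvecCoeff_zero, eigvecCoeff_zero, map_one, mul_one, mul_one]

end Overlap

/-- the eigenbases of `Λ_j` and `Λ_l` restricted to the Pauli subspace
`span(E_n)` (with orbit cardinality `d`) are mutually unbiased — all pairwise overlaps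
have modulus `1/√d` — if and only if `gcd((l−j)·|n|·d/M, d) = 1`. -/
theorem pauli_bases_mub_iff (M : ℕ) [NeZero M] (j l : ℤ) (n : Fin M → ℕ) (d : ℕ)
    (hd : 0 < d) (hfix : modeShift^[d] n = n)
    (hmin : ∀ k, 0 < k → k < d → modeShift^[k] n ≠ n) (hdM : d ∣ M) :
    (∀ m m' : ℕ, (M / d) ∣ m → m < M → (M / d) ∣ m' → m' < M →
        ‖orbitInner n d (pauliEigvec l n d m) (pauliEigvec j n d m')‖
          = 1 / Real.sqrt d) ↔
      Int.gcd ((l - j) * ((totalPhotons n * d / M : ℕ) : ℤ)) (d : ℤ) = 1 := by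
  have hper := Function.minimalPeriod_eq_of_forall_lt hd hfix hmin
  have hq : totalPhotons n * d / M * M = totalPhotons n * d :=
    Nat.div_mul_cancel (dvd_totalPhotons_mul hfix)
  simp only [orbitInner_pauliEigvec hper, norm_one_div_mul_eq_iff hd]
  rw [forall_conj_overlapSum_mul_self_eq_iff hd hfix hdM,
    Int.gcd_eq_one_iff_forall_lt_not_dvd_mul hd]
  simp only [ne_eq, omegaM_zpow_mul_pow_eq_one_iff hd hq]
  simp only [← neg_sub l j, neg_mul, Int.dvd_neg]
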